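/- Let h be a complex polynomial of degree n with all zeros in |z| ≤ 1 and |h(z)| ≥ c > 0 for all |z| = 1, let |λ| = 1, and let e be a polynomial of degree m with |e(z)| ≤ c for |z| = 1. Then for every k > max(m, n), the polynomial z^(2k−n) h(z) + z^k e(z) + λ(h*(z) + z^(k−m) e*(z)) has all its zeros on the unit circle. -/

import Mathlib

/-!
Write `g = X ^ (k - n) * h + e`, of degree `k`; the polynomial is `X ^ k * g + λ g*`.
On the unit circle `‖e*‖ = ‖e‖ ≤ c ≤ ‖h‖ = ‖h*‖`, and `h*` has no zeros in the closed disc, so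
by the maximum modulus principle `‖X ^ (k - m) * e*‖ < ‖h*‖` in the open disc:
`g* = h* + X ^ (k - m) * e*` has no zeros there, i.e. all zeros of `g` lie in the closed disc. Factoring `g` over its roots and
using `‖w - r‖ ≤ ‖1 - w r̄‖` for `‖w‖, ‖r‖ ≤ 1` gives `‖g‖ ≤ ‖g*‖` on the closed disc, hence
`‖z ^ k g(z)‖ < ‖g*(z)‖` for `‖z‖ < 1`; the symmetry `z ↦ 1 / z̄` reverses the strict inequality
for `‖z‖ > 1`. So `z ^ k g(z) + λ g*(z)` vanishes only on the circle.
-/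

open Polynomial

noncomputable def conjReciprocal (h : Polynomial ℂ) : Polynomial ℂ :=
  (h.map (starRingEnd ℂ)).reverse

open ComplexConjugate

theorem Complex.norm_sub_le_norm_one_sub_mul_conj {w r : ℂ} (hw : ‖w‖ ≤ 1) (hr : ‖r‖ ≤ 1) :
    ‖w - r‖ ≤ ‖1 - w * conj r‖ := by
  have key : ‖1 - w * conj r‖ ^ 2 - ‖w - r‖ ^ 2 = (1 - ‖w‖ ^ 2) * (1 - ‖r‖ ^ 2) := by
    simp only [← Complex.normSq_eq_norm_sq, Complex.normSq_apply, Complex.sub_re, Complex.sub_im,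
      Complex.mul_re, Complex.mul_im, Complex.conj_re, Complex.conj_im, Complex.one_re,
      Complex.one_im]
    ring
  rw [← sq_le_sq₀ (norm_nonneg _) (norm_nonneg _)]
  have hw2 : ‖w‖ ^ 2 ≤ 1 := pow_le_one₀ (norm_nonneg w) hw
  have hr2 : ‖r‖ ^ 2 ≤ 1 := pow_le_one₀ (norm_nonneg r) hr
  linarith [mul_nonneg (sub_nonneg.2 hw2) (sub_nonneg.2 hr2)]

lemma eval_conjReciprocal (p : ℂ[X]) {z : ℂ} (hz : z ≠ 0) :
    (conjReciprocal p).eval z = z ^ p.natDegree * conj (p.eval (conj z)⁻¹) := by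
  have : Invertible z⁻¹ := invertibleOfNonzero (inv_ne_zero hz)
  have h := eval₂_reverse_mul_pow (RingHom.id ℂ) z⁻¹ (p.map (starRingEnd ℂ))
  rw [invOf_eq_inv, inv_inv, natDegree_map, ← eval, ← eval,
    show z⁻¹ = conj (conj z)⁻¹ by simp, eval_map_apply] at h
  rw [conjReciprocal, ← h, map_inv₀, Complex.conj_conj, mul_left_comm, ← mul_pow,
    mul_inv_cancel₀ hz, one_pow, mul_one]

lemma eval_zero_conjReciprocal (p : ℂ[X]) :
    (conjReciprocal p).eval 0 = conj p.leadingCoeff := by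
  rw [← coeff_zero_eq_eval_zero, conjReciprocal, coeff_zero_reverse, leadingCoeff_map]

lemma norm_eval_conjReciprocal_of_norm_eq_one (p : ℂ[X]) {z : ℂ} (hz : ‖z‖ = 1) :
    ‖(conjReciprocal p).eval z‖ = ‖p.eval z‖ := by
  rw [eval_conjReciprocal p (norm_ne_zero_iff.1 (by simp [hz])), norm_mul, norm_pow, hz,
    one_pow, one_mul, Complex.norm_conj, ← RCLike.inv_eq_conj hz, inv_inv]

lemma eval_conjReciprocal_ne_zero {p : ℂ[X]} (hp : p ≠ 0)
    (hroots : ∀ z, p.eval z = 0 → ‖z‖ < 1) {w : ℂ} (hw : ‖w‖ ≤ 1) :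
    (conjReciprocal p).eval w ≠ 0 := by
  rcases eq_or_ne w 0 with rfl | hw0
  · simpa [eval_zero_conjReciprocal] using hp
  rw [eval_conjReciprocal p hw0]
  refine mul_ne_zero (pow_ne_zero _ hw0) ((_root_.map_ne_zero _).2 fun hroot => ?_)
  have := hroots _ hroot
  rw [norm_inv, Complex.norm_conj] at this
  exact this.not_ge ((one_le_inv₀ (norm_pos_iff.2 hw0)).2 hw)

lemma norm_le_one_of_eval_eq_zero {p : ℂ[X]}
    (hp : ∀ w, ‖w‖ < 1 → (conjReciprocal p).eval w ≠ 0) {z : ℂ} (hz : p.eval z = 0) :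
    ‖z‖ ≤ 1 := by
  by_contra! hz1
  have hz0 : z ≠ 0 := norm_pos_iff.1 (one_pos.trans hz1)
  refine hp (conj z)⁻¹ ?_ ?_
  · rw [norm_inv, Complex.norm_conj]
    exact inv_lt_one_of_one_lt₀ hz1
  · rw [eval_conjReciprocal p (by simpa using hz0), map_inv₀, Complex.conj_conj, inv_inv, hz,
      map_zero, mul_zero]

lemma norm_eval_le_of_forall_norm_eq_one {p q : ℂ[X]} (hq : ∀ w, ‖w‖ ≤ 1 → q.eval w ≠ 0)
    (hpq : ∀ z, ‖z‖ = 1 → ‖p.eval z‖ ≤ ‖q.eval z‖) {w : ℂ} (hw : ‖w‖ ≤ 1) :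
    ‖p.eval w‖ ≤ ‖q.eval w‖ := by
  have hdiff : DifferentiableOn ℂ (fun z => p.eval z / q.eval z) (Metric.closedBall 0 1) :=
    p.differentiable.differentiableOn.div q.differentiable.differentiableOn fun z hz =>
      hq z (by simpa using hz)
  have hbound : ‖p.eval w / q.eval w‖ ≤ 1 := by
    refine Complex.norm_le_of_forall_mem_frontier_norm_le Metric.isBounded_ball
      (hdiff.diffContOnCl_ball subset_rfl) (fun z hz => ?_)
      (by rwa [closure_ball 0 one_ne_zero, mem_closedBall_zero_iff])
    rw [frontier_ball 0 one_ne_zero, mem_sphere_zero_iff_norm] at hz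
    rw [norm_div]
    exact div_le_one_of_le₀ (hpq z hz) (norm_nonneg _)
  rwa [norm_div, div_le_one₀ (norm_pos_iff.2 (hq w hw))] at hbound

lemma norm_eval_le_norm_eval_conjReciprocal {p : ℂ[X]} (hroots : ∀ z, p.eval z = 0 → ‖z‖ ≤ 1)
    {w : ℂ} (hw0 : w ≠ 0) (hw : ‖w‖ ≤ 1) :
    ‖p.eval w‖ ≤ ‖(conjReciprocal p).eval w‖ := by
  have hcard : p.roots.card = p.natDegree := IsAlgClosed.card_roots_eq_natDegree
  have heval (x : ℂ) : p.eval x = p.leadingCoeff * (p.roots.map (x - ·)).prod := by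
    conv_lhs => rw [← C_leadingCoeff_mul_prod_multiset_X_sub_C hcard]
    simp [eval_multiset_prod, Multiset.map_map]
  have hrev : (conjReciprocal p).eval w
      = conj p.leadingCoeff * (p.roots.map (fun r => 1 - w * conj r)).prod := by
    have hfactor : p.roots.map (fun r => 1 - w * conj r)
        = p.roots.map (fun r => w * conj ((conj w)⁻¹ - r)) := by
      refine Multiset.map_congr rfl fun r _ => ?_
      simp [mul_sub, hw0]
    rw [eval_conjReciprocal p hw0, heval, hfactor, Multiset.prod_map_mul, Multiset.map_const',
      Multiset.prod_replicate, hcard, map_mul, map_multiset_prod, Multiset.map_map,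
      Function.comp_def]
    ring
  rw [heval, hrev, norm_mul, norm_mul, Complex.norm_conj]
  refine mul_le_mul_of_nonneg_left ?_ (norm_nonneg _)
  rw [← normHom_apply, ← normHom_apply, map_multiset_prod, map_multiset_prod, Multiset.map_map,
    Multiset.map_map]
  simp only [Function.comp_def, normHom_apply]
  exact Multiset.prod_map_le_prod_map₀ _ _ (fun _ _ => norm_nonneg _) fun r hr =>
    Complex.norm_sub_le_norm_one_sub_mul_conj hw (hroots r (isRoot_of_mem_roots hr))

lemma eval_add_X_pow_mul_ne_zero {p q : ℂ[X]} {j : ℕ} (hj : j ≠ 0)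
    (hp : ∀ w, ‖w‖ ≤ 1 → p.eval w ≠ 0) (hpq : ∀ z, ‖z‖ = 1 → ‖q.eval z‖ ≤ ‖p.eval z‖)
    {w : ℂ} (hw : ‖w‖ < 1) : (p + X ^ j * q).eval w ≠ 0 := by
  have hlt : ‖w ^ j * q.eval w‖ < ‖p.eval w‖ := calc
    ‖w ^ j * q.eval w‖ = ‖w‖ ^ j * ‖q.eval w‖ := by rw [norm_mul, norm_pow]
    _ ≤ ‖w‖ ^ j * ‖p.eval w‖ := by
      gcongr; exact norm_eval_le_of_forall_norm_eq_one hp hpq hw.le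
    _ < ‖p.eval w‖ :=
      mul_lt_of_lt_one_left (norm_pos_iff.2 (hp w hw.le)) (pow_lt_one₀ (norm_nonneg _) hw hj)
  rw [eval_add, eval_mul, eval_pow, eval_X, ← sub_neg_eq_add, sub_ne_zero]
  rintro heq
  rw [heq, norm_neg] at hlt
  exact hlt.false

lemma natDegree_X_pow_sub_natDegree_mul_add {R : Type*} [Semiring R] [Nontrivial R] {p q : R[X]}
    {k : ℕ} (hp : p ≠ 0) (hpk : p.natDegree ≤ k) (hqk : q.natDegree < k) :
    (X ^ (k - p.natDegree) * p + q).natDegree = k := by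
  have hXp : (X ^ (k - p.natDegree) * p).natDegree = k := by
    rw [natDegree_X_pow_mul _ hp]; omega
  rw [natDegree_add_eq_left_of_natDegree_lt (by rwa [hXp]), hXp]

lemma conjReciprocal_X_pow_sub_natDegree_mul_add {p q : ℂ[X]} {k : ℕ} (hp : p ≠ 0)
    (hpk : p.natDegree ≤ k) (hqk : q.natDegree < k) :
    conjReciprocal (X ^ (k - p.natDegree) * p + q)
      = conjReciprocal p + X ^ (k - q.natDegree) * conjReciprocal q := by
  refine eq_of_infinite_eval_eq _ _ ((Set.finite_singleton 0).infinite_compl.mono fun z hz => ?_)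
  have hz0 : z ≠ 0 := hz
  simp only [Set.mem_ofPred_eq, eval_add, eval_mul, eval_pow, eval_X, eval_conjReciprocal _ hz0,
    natDegree_X_pow_sub_natDegree_mul_add hp hpk hqk, map_add, map_mul, map_pow, map_inv₀,
    Complex.conj_conj, inv_pow, pow_sub₀ z hz0 hpk, pow_sub₀ z hz0 hqk.le]
  field_simp

section SelfInversive

variable {g : ℂ[X]}

lemma norm_X_pow_mul_eval_lt_of_norm_lt_one
    (hg : ∀ w, ‖w‖ < 1 → (conjReciprocal g).eval w ≠ 0) (hd : g.natDegree ≠ 0) {z : ℂ}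
    (hz : ‖z‖ < 1) :
    ‖z ^ g.natDegree * g.eval z‖ < ‖(conjReciprocal g).eval z‖ := by
  have hpos := norm_pos_iff.2 (hg z hz)
  rcases eq_or_ne z 0 with rfl | hz0
  · simpa [zero_pow hd] using hpos
  calc ‖z ^ g.natDegree * g.eval z‖ = ‖z‖ ^ g.natDegree * ‖g.eval z‖ := by
        rw [norm_mul, norm_pow]
    _ ≤ ‖z‖ ^ g.natDegree * ‖(conjReciprocal g).eval z‖ := by
        gcongr
        exact norm_eval_le_norm_eval_conjReciprocal (fun _ => norm_le_one_of_eval_eq_zero hg)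
          hz0 hz.le
    _ < ‖(conjReciprocal g).eval z‖ :=
        mul_lt_of_lt_one_left hpos (pow_lt_one₀ (norm_nonneg _) hz hd)

lemma norm_eval_conjReciprocal_lt_of_one_lt_norm
    (hg : ∀ w, ‖w‖ < 1 → (conjReciprocal g).eval w ≠ 0) (hd : g.natDegree ≠ 0) {z : ℂ}
    (hz : 1 < ‖z‖) :
    ‖(conjReciprocal g).eval z‖ < ‖z ^ g.natDegree * g.eval z‖ := by
  have hz0 : z ≠ 0 := norm_pos_iff.1 (one_pos.trans hz)
  set w := (conj z)⁻¹ with hw_def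
  have hw0 : w ≠ 0 := by simpa [w] using hz0
  have hw : ‖w‖ = ‖z‖⁻¹ := by rw [norm_inv, Complex.norm_conj]
  have hpos := norm_pos_iff.2 (hg w (hw ▸ inv_lt_one_of_one_lt₀ hz))
  have hgz : ‖g.eval z‖ = ‖z‖ ^ g.natDegree * ‖(conjReciprocal g).eval w‖ := by
    rw [eval_conjReciprocal g hw0, norm_mul, norm_pow, Complex.norm_conj, hw, hw_def, map_inv₀,
      Complex.conj_conj, inv_inv, inv_pow, ← mul_assoc,
      mul_inv_cancel₀ (pow_ne_zero _ (norm_ne_zero_iff.2 hz0)), one_mul]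
  have hpow : 1 < ‖z‖ ^ g.natDegree := one_lt_pow₀ hz hd
  calc ‖(conjReciprocal g).eval z‖ = ‖z‖ ^ g.natDegree * ‖g.eval w‖ := by
        rw [eval_conjReciprocal g hz0, norm_mul, norm_pow, Complex.norm_conj]
    _ ≤ ‖z‖ ^ g.natDegree * ‖(conjReciprocal g).eval w‖ := by
        gcongr
        exact norm_eval_le_norm_eval_conjReciprocal (fun _ => norm_le_one_of_eval_eq_zero hg)
          hw0 (by rw [hw]; exact inv_le_one_of_one_le₀ hz.le)
    _ < ‖z ^ g.natDegree * g.eval z‖ := by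
        rw [norm_mul, norm_pow, hgz]
        exact mul_lt_mul_of_pos_left (lt_mul_of_one_lt_left hpos hpow) (by positivity)

theorem norm_eq_one_of_eval_X_pow_mul_add_C_mul_conjReciprocal_eq_zero
    (hg : ∀ w, ‖w‖ < 1 → (conjReciprocal g).eval w ≠ 0) (hd : g.natDegree ≠ 0) {lam : ℂ}
    (hlam : ‖lam‖ = 1) {z : ℂ}
    (hz : (X ^ g.natDegree * g + C lam * conjReciprocal g).eval z = 0) : ‖z‖ = 1 := by
  have hnorm : ‖z ^ g.natDegree * g.eval z‖ = ‖(conjReciprocal g).eval z‖ := by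
    rw [eval_add, eval_mul, eval_mul, eval_pow, eval_X, eval_C, add_eq_zero_iff_eq_neg] at hz
    rw [hz, norm_neg, norm_mul, hlam, one_mul]
  rcases lt_trichotomy ‖z‖ 1 with hlt | heq | hgt
  · exact absurd hnorm (norm_X_pow_mul_eval_lt_of_norm_lt_one hg hd hlt).ne
  · exact heq
  · exact absurd hnorm (norm_eval_conjReciprocal_lt_of_one_lt_norm hg hd hgt).ne'

end SelfInversive

theorem stmt_14 (h e : Polynomial ℂ) (n m : ℕ) (c : ℝ) (lam : ℂ)
    (hn : h.natDegree = n) (hm : e.natDegree = m) (hc : 0 < c)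
    (hzeros : ∀ z : ℂ, h.eval z = 0 → ‖z‖ ≤ 1)
    (hlow : ∀ z : ℂ, ‖z‖ = 1 → c ≤ ‖h.eval z‖)
    (hup : ∀ z : ℂ, ‖z‖ = 1 → ‖e.eval z‖ ≤ c)
    (hlam : ‖lam‖ = 1) (k : ℕ) (hk : max m n < k) :
    ∀ z : ℂ,
      (X ^ (2 * k - n) * h + X ^ k * e
          + C lam * (conjReciprocal h + X ^ (k - m) * conjReciprocal e)).eval z = 0 →
        ‖z‖ = 1 := by
  intro z hz
  subst hn hm
  obtain ⟨hmk, hnk⟩ := max_lt_iff.1 hk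
  have hh0 : h ≠ 0 := by
    rintro rfl
    simpa using hc.trans_le (hlow 1 norm_one)
  have hopen : ∀ z, h.eval z = 0 → ‖z‖ < 1 := fun z hz =>
    (hzeros z hz).lt_of_ne fun hz1 => by simpa [hz] using hc.trans_le (hlow z hz1)
  have hg : ∀ w, ‖w‖ < 1 → (conjReciprocal (X ^ (k - h.natDegree) * h + e)).eval w ≠ 0 := by
    intro w hw
    rw [conjReciprocal_X_pow_sub_natDegree_mul_add hh0 hnk.le hmk]
    refine eval_add_X_pow_mul_ne_zero (by omega)
      (fun _ => eval_conjReciprocal_ne_zero hh0 hopen) (fun z hz => ?_) hw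
    rw [norm_eval_conjReciprocal_of_norm_eq_one _ hz, norm_eval_conjReciprocal_of_norm_eq_one _ hz]
    exact (hup z hz).trans (hlow z hz)
  have hdeg := natDegree_X_pow_sub_natDegree_mul_add hh0 hnk.le hmk
  refine norm_eq_one_of_eval_X_pow_mul_add_C_mul_conjReciprocal_eq_zero hg (by omega) hlam ?_
  rwa [hdeg, conjReciprocal_X_pow_sub_natDegree_mul_add hh0 hnk.le hmk, mul_add, ← mul_assoc,
    ← pow_add, show k + (k - h.natDegree) = 2 * k - h.natDegree by omega]
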